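/- arXiv:2407.00623 — 2 statements merged into one kernel-verified Lean document; each statement's English description precedes it below -/
import Mathlib

section
/- Let (Ω, ℱ, ℙ) be a probability space, let X : Ω → ℝ be a random variable with ℙ(X = 1) = ℙ(X = −1) = 1/2, let ε : Ω → ℝ be a standard Gaussian random variable independent of X, and fix t > 0. Set X_t = X + t·ε. Then the conditional expectation of X given (the σ-algebra generated by) X_t satisfies E[X | X_t] = tanh(X_t / t²) almost surely. -/
/-!
Writing `Y = X + t ε`, it suffices to check `∫_{Y ∈ s} X = ∫_{Y ∈ s} tanh (Y / t²)` for Borel `s`.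
By independence the joint law of `(X, Y)` is `½ δ₁ ⊗ N(1, t²) + ½ δ₋₁ ⊗ N(-1, t²)`, so both sides
become integrals over `s` against the Gaussian densities `p₊` and `p₋` of mean `±1`. They agree
because `p₊ - p₋ = tanh (y / t²) (p₊ + p₋)`: the two densities differ only by the factor
`exp (± y / t²)`.
-/

open MeasureTheory ProbabilityTheory Real
open scoped ENNReal NNReal

@[fun_prop]
theorem Real.continuous_tanh : Continuous tanh := by
  rw [show tanh = fun x => sinh x / cosh x from funext tanh_eq_sinh_div_cosh]
  exact continuous_sinh.div continuous_cosh fun x => (cosh_pos x).ne'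

theorem integrable_tanh_comp {α : Type*} [MeasurableSpace α] {μ : Measure α} [IsFiniteMeasure μ]
    {f : α → ℝ} (hf : AEStronglyMeasurable f μ) : Integrable (fun x => tanh (f x)) μ :=
  .of_bound (continuous_tanh.comp_aestronglyMeasurable hf) 1
    (ae_of_all _ fun _ => (abs_tanh_lt_one _).le)

namespace MeasureTheory.Measure

variable {α β : Type*} [MeasurableSpace α] [MeasurableSpace β]

theorem eq_smul_dirac_add_smul_dirac [MeasurableSingletonClass α] {μ : Measure α} {a b : α}
    (hab : a ≠ b) (h : ∀ᵐ x ∂μ, x = a ∨ x = b) :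
    μ = μ {a} • dirac a + μ {b} • dirac b :=
  calc μ = μ.restrict ({a} ∪ {b}) := (restrict_eq_self_of_ae_mem h).symm
    _ = μ {a} • dirac a + μ {b} • dirac b := by
      rw [restrict_union (Set.disjoint_singleton.2 hab) (measurableSet_singleton b),
        restrict_singleton, restrict_singleton]

theorem setIntegral_snd_preimage_map_prodMk_add {E : Type*} [NormedAddCommGroup E]
    [NormedSpace ℝ E] [MeasurableSingletonClass α] {a b : α} {μ ν : Measure β}
    {f : α × β → E} {s : Set β} (hμ : IntegrableOn (fun y => f (a, y)) s μ)
    (hν : IntegrableOn (fun y => f (b, y)) s ν) :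
    ∫ p in Prod.snd ⁻¹' s, f p ∂(μ.map (Prod.mk a) + ν.map (Prod.mk b)) =
      ∫ y in s, f (a, y) ∂μ + ∫ y in s, f (b, y) ∂ν := by
  rw [restrict_add,
    integral_add_measure ((measurableEmbedding_prodMk_left a).integrableOn_map_iff.2 hμ)
      ((measurableEmbedding_prodMk_left b).integrableOn_map_iff.2 hν),
    (measurableEmbedding_prodMk_left a).setIntegral_map,
    (measurableEmbedding_prodMk_left b).setIntegral_map]
  rfl

end MeasureTheory.Measure

open Measure

section TwoPointLaw

variable {Ω α : Type*} [MeasurableSpace Ω] [MeasurableSpace α] [MeasurableSingletonClass α]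
  {P : Measure Ω} {X : Ω → α}

theorem ae_eq_or_eq_of_measure_add_eq_one [IsProbabilityMeasure P] (hX : Measurable X)
    {a b : α} (hab : a ≠ b) (h : P {ω | X ω = a} + P {ω | X ω = b} = 1) :
    ∀ᵐ ω ∂P, X ω = a ∨ X ω = b := by
  have hXa : MeasurableSet {ω | X ω = a} := hX (measurableSet_singleton a)
  have hXb : MeasurableSet {ω | X ω = b} := hX (measurableSet_singleton b)
  rw [ae_iff_measure_eq (p := fun ω => X ω = a ∨ X ω = b) (hXa.union hXb).nullMeasurableSet,
    measure_univ, Set.ofPred_or,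
    measure_union (Set.disjoint_left.2 fun _ ha hb => hab (ha.symm.trans hb)) hXb, h]

theorem map_eq_smul_dirac_add_smul_dirac (hX : Measurable X) {a b : α} (hab : a ≠ b)
    (h : ∀ᵐ ω ∂P, X ω = a ∨ X ω = b) :
    P.map X = P {ω | X ω = a} • dirac a + P {ω | X ω = b} • dirac b := by
  rw [eq_smul_dirac_add_smul_dirac hab ((ae_map_iff hX.aemeasurable
      ((measurableSet_singleton a).union (measurableSet_singleton b))).2 h),
    map_apply hX (measurableSet_singleton a), map_apply hX (measurableSet_singleton b)]
  rfl

end TwoPointLaw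

theorem setIntegral_gaussianReal_eq_setIntegral_mul (m : ℝ) {v : ℝ≥0} (hv : v ≠ 0)
    (g : ℝ → ℝ) (s : Set ℝ) :
    ∫ y in s, g y ∂gaussianReal m v = ∫ y in s, gaussianPDFReal m v y * g y := by
  rw [gaussianReal_of_var_ne_zero m hv, setIntegral_withDensity_eq_setIntegral_toReal_smul' s
    (measurable_gaussianPDF m v) (ae_of_all _ fun _ => gaussianPDF_lt_top) g]
  simp

theorem gaussianPDFReal_sub_gaussianPDFReal_neg (m : ℝ) {v : ℝ≥0} (hv : v ≠ 0) (y : ℝ) :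
    gaussianPDFReal m v y - gaussianPDFReal (-m) v y =
      tanh (m * y / v) * (gaussianPDFReal m v y + gaussianPDFReal (-m) v y) := by
  have hv' : (v : ℝ) ≠ 0 := NNReal.coe_ne_zero.2 hv
  have hsplit : ∀ c : ℝ, gaussianPDFReal c v y =
      gaussianPDFReal 0 v y * exp (-c ^ 2 / (2 * v)) * exp (c * y / v) := by
    intro c
    simp only [gaussianPDFReal, mul_assoc, ← exp_add]
    congr 2
    field_simp
    ring
  rw [hsplit m, hsplit (-m), tanh_eq_sinh_div_cosh, sinh_eq, cosh_eq, neg_sq, neg_mul, neg_div]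
  have : exp (m * y / v) + exp (-(m * y / v)) ≠ 0 := by positivity
  field_simp

theorem setIntegral_tanh_gaussianReal_add (m : ℝ) {v : ℝ≥0} (hv : v ≠ 0) (s : Set ℝ) :
    ∫ y in s, tanh (m * y / v) ∂gaussianReal m v +
        ∫ y in s, tanh (m * y / v) ∂gaussianReal (-m) v =
      (gaussianReal m v).real s - (gaussianReal (-m) v).real s := by
  have hint : ∀ c, IntegrableOn (fun y => gaussianPDFReal c v y * tanh (m * y / v)) s :=
    fun c => ((integrable_gaussianPDFReal c v).mul_bdd
      (continuous_tanh.comp_aestronglyMeasurable (by fun_prop))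
      (ae_of_all _ fun _ => (abs_tanh_lt_one _).le)).integrableOn
  have hreal : ∀ c, (gaussianReal c v).real s = ∫ y in s, gaussianPDFReal c v y := fun c => by
    simpa using setIntegral_gaussianReal_eq_setIntegral_mul c hv (fun _ => 1) s
  rw [setIntegral_gaussianReal_eq_setIntegral_mul m hv,
    setIntegral_gaussianReal_eq_setIntegral_mul (-m) hv, ← integral_add (hint m) (hint (-m)),
    hreal, hreal, ← integral_sub (integrable_gaussianPDFReal m v).integrableOn
      (integrable_gaussianPDFReal (-m) v).integrableOn]
  congr 1 with y
  linear_combination -gaussianPDFReal_sub_gaussianPDFReal_neg m hv y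

/-- The joint law of `(X, X + √v • ε)` for `X` uniform on `{m, -m}` and an independent standard
Gaussian `ε`. -/
noncomputable def twoPointNoisyLaw (m : ℝ) (v : ℝ≥0) : Measure (ℝ × ℝ) :=
  ((1 / 2 : ℝ≥0∞) • gaussianReal m v).map (Prod.mk m) +
    ((1 / 2 : ℝ≥0∞) • gaussianReal (-m) v).map (Prod.mk (-m))

theorem setIntegral_tanh_snd_twoPointNoisyLaw (m : ℝ) {v : ℝ≥0} (hv : v ≠ 0) (s : Set ℝ) :
    ∫ p in Prod.snd ⁻¹' s, m * tanh (m * p.2 / v) ∂twoPointNoisyLaw m v =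
      ∫ p in Prod.snd ⁻¹' s, p.1 ∂twoPointNoisyLaw m v := by
  have htanh : ∀ c,
      IntegrableOn (fun y => m * tanh (m * y / v)) s ((1 / 2 : ℝ≥0∞) • gaussianReal c v) :=
    fun c => (((integrable_tanh_comp (by fun_prop)).const_mul m).smul_measure
      (by simp)).integrableOn
  have hconst : ∀ c d : ℝ, IntegrableOn (fun _ => d) s ((1 / 2 : ℝ≥0∞) • gaussianReal c v) :=
    fun c d => ((integrable_const d).smul_measure (by simp)).integrableOn
  rw [twoPointNoisyLaw, setIntegral_snd_preimage_map_prodMk_add (htanh m) (htanh (-m)),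
    setIntegral_snd_preimage_map_prodMk_add (hconst m m) (hconst (-m) (-m))]
  simp only [Measure.restrict_smul, integral_smul_measure, integral_const_mul, setIntegral_const,
    smul_eq_mul]
  linear_combination (1 / 2 : ℝ≥0∞).toReal * m * setIntegral_tanh_gaussianReal_add m hv s

theorem map_dirac_prod_gaussianReal (a t : ℝ) :
    ((dirac a).prod (gaussianReal 0 1)).map (fun p => (p.1, p.1 + t * p.2)) =
      (gaussianReal a (.mk (t ^ 2) (sq_nonneg t))).map (Prod.mk a) := by
  have hcomp : (fun p : ℝ × ℝ => (p.1, p.1 + t * p.2)) ∘ Prod.mk a =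
      Prod.mk a ∘ (a + ·) ∘ (t * ·) := rfl
  rw [dirac_prod, map_map (by fun_prop) measurable_prodMk_left, hcomp,
    ← map_map measurable_prodMk_left (by fun_prop), ← map_map (by fun_prop) (by fun_prop),
    gaussianReal_map_const_mul, gaussianReal_map_const_add]
  simp

section NoisyObservation

variable {Ω : Type*} [MeasurableSpace Ω] {P : Measure Ω} [IsFiniteMeasure P] {X ε : Ω → ℝ}

theorem map_prodMk_add_mul_of_indepFun (hX : Measurable X) (hε : Measurable ε)
    (hindep : IndepFun X ε P) (t : ℝ) :
    P.map (fun ω => (X ω, X ω + t * ε ω)) =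
      ((P.map X).prod (P.map ε)).map (fun p => (p.1, p.1 + t * p.2)) := by
  rw [← (indepFun_iff_map_prod_eq_prod_map_map hX.aemeasurable hε.aemeasurable).1 hindep,
    map_map (by fun_prop) (hX.prodMk hε)]
  rfl

theorem map_prodMk_add_mul_eq_twoPointNoisyLaw (hX : Measurable X) (hε : Measurable ε) {m : ℝ}
    (hXlaw : P.map X = (1 / 2 : ℝ≥0∞) • dirac m + (1 / 2 : ℝ≥0∞) • dirac (-m))
    (hεlaw : P.map ε = gaussianReal 0 1) (hindep : IndepFun X ε P) (t : ℝ) :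
    P.map (fun ω => (X ω, X ω + t * ε ω)) = twoPointNoisyLaw m (.mk (t ^ 2) (sq_nonneg t)) := by
  rw [map_prodMk_add_mul_of_indepFun hX hε hindep, hXlaw, hεlaw, add_prod, prod_smul_left,
    prod_smul_left, Measure.map_add _ _ (by fun_prop), Measure.map_smul, Measure.map_smul,
    map_dirac_prod_gaussianReal, map_dirac_prod_gaussianReal, twoPointNoisyLaw,
    Measure.map_smul, Measure.map_smul]

end NoisyObservation

/-- **Posterior mean of Example 3.1.** Let `X` be a ±1-valued random variable with
`P(X = 1) = P(X = −1) = 1/2`, let `ε` be a standard Gaussian independent of `X`, fix `t > 0`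
and set `X_t = X + t·ε`. Then `E[X | X_t] = tanh(X_t / t²)` almost surely. -/
theorem posterior_mean_two_point {Ω : Type*} [MeasurableSpace Ω]
    (P : Measure Ω) [IsProbabilityMeasure P]
    (X ε : Ω → ℝ) (hX : Measurable X) (hε : Measurable ε)
    (hX1 : P {ω | X ω = 1} = 1 / 2) (hXm1 : P {ω | X ω = -1} = 1 / 2)
    (hεlaw : P.map ε = gaussianReal 0 1)
    (hindep : IndepFun X ε P)
    (t : ℝ) (ht : 0 < t) :
    P[X | MeasurableSpace.comap (fun ω => X ω + t * ε ω) inferInstance] =ᵐ[P]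
      fun ω => Real.tanh ((X ω + t * ε ω) / t ^ 2) := by
  set Y := fun ω => X ω + t * ε ω
  have hY : Measurable Y := by fun_prop
  have hv : (.mk (t ^ 2) (sq_nonneg t) : ℝ≥0) ≠ 0 := by
    simpa [← NNReal.coe_ne_zero] using ht.ne'
  have hXae : ∀ᵐ ω ∂P, X ω = 1 ∨ X ω = -1 :=
    ae_eq_or_eq_of_measure_add_eq_one hX (by norm_num) (by rw [hX1, hXm1, ENNReal.add_halves])
  have hXlaw : P.map X = (1 / 2 : ℝ≥0∞) • dirac 1 + (1 / 2 : ℝ≥0∞) • dirac (-1) := by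
    rw [map_eq_smul_dirac_add_smul_dirac hX (by norm_num) hXae, hX1, hXm1]
  have hXint : Integrable X P := .of_bound hX.aestronglyMeasurable 1
    (hXae.mono fun ω h => by rcases h with h | h <;> simp [h])
  refine (ae_eq_condExp_of_forall_setIntegral_eq hY.comap_le hXint
    (fun _ _ _ => (integrable_tanh_comp (by fun_prop)).integrableOn) ?_
    (continuous_tanh.comp_aestronglyMeasurable
      ((comap_measurable Y).div_const _).aestronglyMeasurable)).symm
  rintro _ ⟨s, hs, rfl⟩ -
  have htransfer : ∀ f : ℝ × ℝ → ℝ, Measurable f →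
      ∫ ω in Y ⁻¹' s, f (X ω, Y ω) ∂P = ∫ p in Prod.snd ⁻¹' s, f p ∂(P.map fun ω => (X ω, Y ω)) :=
    fun f hf => (setIntegral_map (measurable_snd hs) hf.aestronglyMeasurable
      (hX.prodMk hY).aemeasurable).symm
  calc ∫ ω in Y ⁻¹' s, tanh (Y ω / t ^ 2) ∂P
      = ∫ p in Prod.snd ⁻¹' s, tanh (p.2 / t ^ 2) ∂(P.map fun ω => (X ω, Y ω)) :=
        htransfer (fun p => tanh (p.2 / t ^ 2)) (by fun_prop)
    _ = ∫ p in Prod.snd ⁻¹' s, p.1 ∂(P.map fun ω => (X ω, Y ω)) := by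
        rw [map_prodMk_add_mul_eq_twoPointNoisyLaw hX hε hXlaw hεlaw hindep t]
        simpa using setIntegral_tanh_snd_twoPointNoisyLaw 1 hv s
    _ = ∫ ω in Y ⁻¹' s, X ω ∂P := (htransfer Prod.fst measurable_fst).symm
end

section
/- Let T > 0 and let x : (0, T] → ℝ be differentiable and satisfy x′(t) = x(t)/t − (1/t)·tanh(x(t)/t²) for all t ∈ (0, T]. If x(t) > 0 for all t ∈ (0, T], then x(t) → 1 as t → 0⁺; if x(t) < 0 for all t ∈ (0, T], then x(t) → −1 as t → 0⁺. -/
/-!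
The probability-flow ODE is the transport equation of the densities `p_t`, so it preserves
their cumulative distribution function: `F t (x t)` is constant along every trajectory, where
`F t y = Φ((y - 1)/t) + Φ((y + 1)/t)` is, up to an affine change, the CDF of `p_t`. A trajectory
with `x T > 0` sits on a level `c ∈ (0, 2L)`, `L = lim Φ`. As `t → 0⁺` the function `F t`
converges to `-2L`, `0`, `2L` on `(-∞, -1)`, `(-1, 1)`, `(1, ∞)`, so the level set
`{y | F t y = c}` is squeezed to the point `1`. The negative case follows by the symmetry `x ↦ -x`.
-/

open Real Set Filter Topology

noncomputable section

def gaussPrimitive (y : ℝ) : ℝ := ∫ s in (0 : ℝ)..y, exp (-(1 / 2) * s ^ 2)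

lemma hasDerivAt_gaussPrimitive (y : ℝ) :
    HasDerivAt gaussPrimitive (exp (-(1 / 2) * y ^ 2)) y :=
  ((by fun_prop : Continuous fun s : ℝ => exp (-(1 / 2) * s ^ 2)).integral_hasStrictDerivAt
    0 y).hasDerivAt

lemma strictMono_gaussPrimitive : StrictMono gaussPrimitive :=
  strictMono_of_deriv_pos fun y => (hasDerivAt_gaussPrimitive y).deriv ▸ exp_pos _

lemma gaussPrimitive_neg (y : ℝ) : gaussPrimitive (-y) = -gaussPrimitive y := by
  have h := intervalIntegral.integral_comp_neg (a := 0) (b := y)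
    (fun s : ℝ => exp (-(1 / 2) * s ^ 2))
  simp only [neg_sq, neg_zero] at h
  rw [gaussPrimitive, intervalIntegral.integral_symm, ← h, gaussPrimitive]

lemma tendsto_gaussPrimitive_atTop : Tendsto gaussPrimitive atTop (𝓝 √(π / 2)) := by
  have h := MeasureTheory.intervalIntegral_tendsto_integral_Ioi 0
    (integrable_exp_neg_mul_sq (by norm_num : (0 : ℝ) < 1 / 2)).integrableOn tendsto_id
  have hL : √(π / (1 / 2)) / 2 = √(π / 2) := by
    rw [show π / (1 / 2) = 2 ^ 2 * (π / 2) by ring, sqrt_mul (by norm_num),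
      sqrt_sq (by norm_num)]
    ring
  rwa [integral_gaussian_Ioi, hL] at h

lemma tendsto_gaussPrimitive_atBot : Tendsto gaussPrimitive atBot (𝓝 (-√(π / 2))) :=
  (tendsto_gaussPrimitive_atTop.comp tendsto_neg_atBot_atTop).neg.congr fun y => by
    simp [gaussPrimitive_neg]

lemma gaussPrimitive_lt (y : ℝ) : gaussPrimitive y < √(π / 2) :=
  (strictMono_gaussPrimitive (lt_add_one y)).trans_le <|
    ge_of_tendsto tendsto_gaussPrimitive_atTop <|
      (eventually_ge_atTop (y + 1)).mono fun _ hz => strictMono_gaussPrimitive.monotone hz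

lemma tendsto_gaussPrimitive_div_nhdsGT_zero {a : ℝ} (ha : 0 < a) :
    Tendsto (fun t => gaussPrimitive (a / t)) (𝓝[>] 0) (𝓝 √(π / 2)) :=
  tendsto_gaussPrimitive_atTop.comp <|
    (tendsto_inv_nhdsGT_zero.const_mul_atTop ha).congr fun t => (div_eq_mul_inv a t).symm

lemma tendsto_gaussPrimitive_div_nhdsGT_zero_of_neg {a : ℝ} (ha : a < 0) :
    Tendsto (fun t => gaussPrimitive (a / t)) (𝓝[>] 0) (𝓝 (-√(π / 2))) :=
  tendsto_gaussPrimitive_atBot.comp <|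
    (tendsto_inv_nhdsGT_zero.const_mul_atTop_of_neg ha).congr fun t =>
      (div_eq_mul_inv a t).symm

/-- An affine rescaling of the CDF of `p_t = (N(1, t²) + N(-1, t²)) / 2`. -/
def mixtureCdf (t y : ℝ) : ℝ := gaussPrimitive ((y - 1) / t) + gaussPrimitive ((y + 1) / t)

lemma strictMono_mixtureCdf {t : ℝ} (ht : 0 < t) : StrictMono (mixtureCdf t) := fun _ _ h =>
  add_lt_add (strictMono_gaussPrimitive (by gcongr)) (strictMono_gaussPrimitive (by gcongr))

lemma mixtureCdf_pos {t y : ℝ} (ht : 0 < t) (hy : 0 < y) : 0 < mixtureCdf t y := by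
  have h : gaussPrimitive (-((y + 1) / t)) < gaussPrimitive ((y - 1) / t) :=
    strictMono_gaussPrimitive (by rw [← neg_div]; gcongr; linarith)
  rw [gaussPrimitive_neg] at h
  unfold mixtureCdf
  linarith

lemma mixtureCdf_lt_gaussPrimitive_add (t y : ℝ) :
    mixtureCdf t y < gaussPrimitive ((y - 1) / t) + √(π / 2) :=
  add_lt_add_right (gaussPrimitive_lt _) _

lemma mixtureCdf_lt (t y : ℝ) : mixtureCdf t y < 2 * √(π / 2) := by
  linarith [mixtureCdf_lt_gaussPrimitive_add t y, gaussPrimitive_lt ((y - 1) / t)]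

lemma tendsto_mixtureCdf_of_one_lt {b : ℝ} (hb : 1 < b) :
    Tendsto (fun t => mixtureCdf t b) (𝓝[>] 0) (𝓝 (2 * √(π / 2))) := by
  rw [two_mul]
  exact (tendsto_gaussPrimitive_div_nhdsGT_zero (by linarith)).add
    (tendsto_gaussPrimitive_div_nhdsGT_zero (by linarith))

lemma tendsto_one_of_mixtureCdf_eq {y : ℝ → ℝ} {c : ℝ} (hc₀ : 0 < c) (hc : c < 2 * √(π / 2))
    (hy : ∀ᶠ t in 𝓝[>] 0, mixtureCdf t (y t) = c) : Tendsto y (𝓝[>] 0) (𝓝 1) := by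
  refine tendsto_order.2 ⟨fun a ha => ?_, fun b hb => ?_⟩
  · have hlim : Tendsto (fun t => gaussPrimitive ((a - 1) / t) + √(π / 2)) (𝓝[>] 0) (𝓝 0) := by
      simpa using (tendsto_gaussPrimitive_div_nhdsGT_zero_of_neg (sub_neg.2 ha)).add_const
        √(π / 2)
    filter_upwards [hy, self_mem_nhdsWithin, hlim.eventually (gt_mem_nhds hc₀)]
      with t hyt (ht : 0 < t) hat
    by_contra! hle
    have := (strictMono_mixtureCdf ht).monotone hle
    linarith [mixtureCdf_lt_gaussPrimitive_add t a]
  · filter_upwards [hy, self_mem_nhdsWithin, (tendsto_mixtureCdf_of_one_lt hb).eventually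
      (lt_mem_nhds hc)] with t hyt (ht : 0 < t) hbt
    by_contra! hle
    linarith [(strictMono_mixtureCdf ht).monotone hle]

def pfVelocity (t y : ℝ) : ℝ := y / t - (1 / t) * tanh (y / t ^ 2)

lemma pfVelocity_neg (t y : ℝ) : pfVelocity t (-y) = -pfVelocity t y := by
  simp only [pfVelocity, neg_div, tanh_neg]
  ring

/-- `(1 + tanh a) / (1 - tanh a) = exp (2 a)`, and the two Gaussian weights have ratio
`exp (2 y / t²)`. -/
lemma exp_mul_one_sub_tanh (y : ℝ) {t : ℝ} (ht : t ≠ 0) :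
    exp (-(1 / 2) * ((y - 1) / t) ^ 2) * (1 - tanh (y / t ^ 2)) =
      exp (-(1 / 2) * ((y + 1) / t) ^ 2) * (1 + tanh (y / t ^ 2)) := by
  have hcosh : cosh (y / t ^ 2) ≠ 0 := (cosh_pos _).ne'
  have hsub : 1 - tanh (y / t ^ 2) = exp (-(y / t ^ 2)) / cosh (y / t ^ 2) := by
    rw [tanh_eq_sinh_div_cosh, ← cosh_sub_sinh]
    field_simp
  have hadd : 1 + tanh (y / t ^ 2) = exp (y / t ^ 2) / cosh (y / t ^ 2) := by
    rw [tanh_eq_sinh_div_cosh, ← cosh_add_sinh]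
    field_simp
  have hexp : -(1 / 2) * ((y - 1) / t) ^ 2 + -(y / t ^ 2) =
      -(1 / 2) * ((y + 1) / t) ^ 2 + y / t ^ 2 := by
    field_simp
    ring
  rw [hsub, hadd, mul_div_assoc', mul_div_assoc', ← exp_add, ← exp_add, hexp]

lemma hasDerivAt_mixtureCdf_comp {x : ℝ → ℝ} {t : ℝ} (ht : t ≠ 0)
    (hx : HasDerivAt x (pfVelocity t (x t)) t) :
    HasDerivAt (fun s => mixtureCdf s (x s)) 0 t := by
  have hquot (e : ℝ) : HasDerivAt (fun s => (x s + e) / s) ((-e - tanh (x t / t ^ 2)) / t ^ 2) t :=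
    ((hx.add_const e).div (hasDerivAt_id t) ht).congr_deriv <| by
      simp only [pfVelocity, id]
      field_simp
      ring
  have h := ((hasDerivAt_gaussPrimitive _).comp t (hquot (-1))).add
    ((hasDerivAt_gaussPrimitive _).comp t (hquot 1))
  simp only [← sub_eq_add_neg, neg_neg] at h
  refine h.congr_deriv ?_
  rw [mul_div_assoc', mul_div_assoc', ← add_div, div_eq_zero_iff]
  left
  linear_combination exp_mul_one_sub_tanh (x t) ht

lemma mixtureCdf_comp_eq_of_pfOde {x : ℝ → ℝ} {T : ℝ}
    (hode : ∀ t ∈ Ioc 0 T, HasDerivAt x (pfVelocity t (x t)) t) {t : ℝ} (ht : t ∈ Ioc 0 T) :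
    mixtureCdf t (x t) = mixtureCdf T (x T) := by
  have hderiv (s : ℝ) (hs : t ≤ s) (hsT : s ≤ T) :
      HasDerivAt (fun s => mixtureCdf s (x s)) 0 s :=
    hasDerivAt_mixtureCdf_comp (ht.1.trans_le hs).ne' (hode s ⟨ht.1.trans_le hs, hsT⟩)
  exact (constant_of_has_deriv_right_zero
    (fun s hs => (hderiv s hs.1 hs.2).continuousAt.continuousWithinAt)
    (fun s hs => (hderiv s hs.1 hs.2.le).hasDerivWithinAt) T ⟨ht.2, le_rfl⟩).symm

theorem tendsto_one_of_pfOde {T : ℝ} (hT : 0 < T) {x : ℝ → ℝ}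
    (hode : ∀ t ∈ Ioc 0 T, HasDerivAt x (pfVelocity t (x t)) t) (hxT : 0 < x T) :
    Tendsto x (𝓝[>] 0) (𝓝 1) :=
  tendsto_one_of_mixtureCdf_eq (mixtureCdf_pos hT hxT) (mixtureCdf_lt T (x T)) <|
    eventually_of_mem (Ioc_mem_nhdsGT hT) fun _ ht => mixtureCdf_comp_eq_of_pfOde hode ht

end

/-- **Trajectories converge to the data manifold.** Let `T > 0` and let `x : (0, T] → ℝ` be
differentiable, satisfying the probability-flow ODE
`x′(t) = x(t)/t − (1/t)·tanh(x(t)/t²)` on `(0, T]`. If `x(t) > 0` for all `t ∈ (0, T]`, then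
`x(t) → 1` as `t → 0⁺`; if `x(t) < 0` for all `t ∈ (0, T]`, then `x(t) → −1` as `t → 0⁺`. -/
theorem pf_ode_limit_at_zero (T : ℝ) (hT : 0 < T)
    (x : ℝ → ℝ)
    (hode : ∀ t ∈ Ioc 0 T,
      HasDerivAt x (x t / t - (1 / t) * Real.tanh (x t / t ^ 2)) t) :
    ((∀ t ∈ Ioc 0 T, 0 < x t) →
      Tendsto x (nhdsWithin 0 (Ioi 0)) (nhds 1)) ∧
    ((∀ t ∈ Ioc 0 T, x t < 0) →
      Tendsto x (nhdsWithin 0 (Ioi 0)) (nhds (-1))) := by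
  have hT_mem : T ∈ Ioc 0 T := ⟨hT, le_rfl⟩
  refine ⟨fun hpos => tendsto_one_of_pfOde hT hode (hpos T hT_mem), fun hneg => ?_⟩
  have hode_neg : ∀ t ∈ Ioc 0 T, HasDerivAt (-x) (pfVelocity t ((-x) t)) t := fun t ht => by
    rw [Pi.neg_apply, pfVelocity_neg]
    exact (hode t ht).neg
  simpa using (tendsto_one_of_pfOde hT hode_neg (neg_pos.2 (hneg T hT_mem))).neg
end
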